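/- arXiv:2111.14393 — 6 statements merged into one kernel-verified Lean document; each statement's English description precedes it below -/
import Mathlib

section
/- Let M be a metric space with base point 0, and let x, y, u, v ∈ M with x ≠ y and u ≠ v, and assume d(x,y) ≥ d(u,v). If for some ε > 0 one has d(x,v) + d(u,y) ≥ d(x,y) + d(u,v) − ε·d(x,y), then for every real-valued Lipschitz function f on M with f(0)=0 and Lipschitz constant at most 1 defined by f(p) = min{ d(y,p), d(v,p) + d(y,u) − d(u,v) } + a (with a chosen so f(0)=0), one has f(x) − f(y) ≥ (1−ε)·d(x,y) and f(u) − f(v) = d(u,v). -/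
/-!
With `g p = min (d(y,p)) (d(v,p) + d(y,u) - d(u,v))` we have `f = g - g z`, and `g` is
`1`-Lipschitz as a minimum of two `1`-Lipschitz functions. The triangle inequality gives `g y = 0`,
`g u = d(y,u)` and `g v = d(y,u) - d(u,v)`; the hypothesis on `ε` says exactly that the second
argument of the minimum at `x` is at least `(1 - ε) d(x,y)`.
-/

noncomputable def mcShaneWitness {M : Type*} [PseudoMetricSpace M] (y u v : M) (p : M) : ℝ :=
  min (dist y p) (dist v p + dist y u - dist u v)

section
variable {M : Type*} [PseudoMetricSpace M] (y u v : M)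

theorem lipschitzWith_mcShaneWitness : LipschitzWith 1 (mcShaneWitness y u v) := by
  have hv : LipschitzWith 1 fun p => dist v p + dist y u - dist u v :=
    LipschitzWith.of_dist_le_mul fun p q => by simp [Real.dist_eq, abs_dist_sub_le, dist_comm v]
  have := (LipschitzWith.dist_right y).min hv
  rwa [max_self] at this

theorem mcShaneWitness_self : mcShaneWitness y u v y = 0 := by
  have : dist u v ≤ dist v y + dist y u := by
    linarith [dist_triangle u y v, dist_comm u y, dist_comm v y]
  simp [mcShaneWitness, this]

theorem mcShaneWitness_left : mcShaneWitness y u v u = dist y u := by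
  simp [mcShaneWitness, dist_comm v u]

theorem mcShaneWitness_right : mcShaneWitness y u v v = dist y u - dist u v := by
  have : dist y u ≤ dist y v + dist u v := by
    simpa [dist_comm u v] using dist_triangle y v u
  simp [mcShaneWitness, this]

theorem le_mcShaneWitness {x : M} {ε : ℝ} (hε : 0 ≤ ε)
    (h : dist x y + dist u v - ε * dist x y ≤ dist x v + dist u y) :
    (1 - ε) * dist x y ≤ mcShaneWitness y u v x := by
  refine le_min ?_ ?_
  · nlinarith [dist_nonneg (x := x) (y := y), dist_comm x y]
  · rw [dist_comm v x, dist_comm y u]; linarith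

end

theorem stmt0_general {M : Type*} [MetricSpace M] (z x y u v : M)
    (ε : ℝ) (hε : 0 < ε)
    (h : dist x y + dist u v - ε * dist x y ≤ dist x v + dist u y)
    (f : M → ℝ)
    (hf : ∀ p, f p = min (dist y p) (dist v p + dist y u - dist u v)
          - min (dist y z) (dist v z + dist y u - dist u v)) :
    f z = 0 ∧ LipschitzWith 1 f ∧
      (1 - ε) * dist x y ≤ f x - f y ∧ f u - f v = dist u v := by
  have hf_eq : f = fun p => mcShaneWitness y u v p - mcShaneWitness y u v z := funext hf
  subst hf_eq
  refine ⟨sub_self _, ?_, ?_, ?_⟩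
  · exact LipschitzWith.of_dist_le_mul fun p q => by
      simpa [Real.dist_eq] using (lipschitzWith_mcShaneWitness y u v).dist_le_mul p q
  · simpa [mcShaneWitness_self] using le_mcShaneWitness y u v hε.le h
  · simp only [sub_sub_sub_cancel_right, mcShaneWitness_left, mcShaneWitness_right]
    ring

/-- the McShane-type witness function from Lemma 1.2 (`lip_norm`),
`f p = min (d y p) (d v p + d y u - d u v) + a` with `a` chosen so that `f z = 0`,
is `1`-Lipschitz, vanishes at the base point, and satisfies
`f x - f y ≥ (1 - ε) d(x,y)` and `f u - f v = d(u,v)`. -/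
theorem stmt0 {M : Type*} [MetricSpace M] (z x y u v : M)
    (hxy : x ≠ y) (huv : u ≠ v) (hd : dist u v ≤ dist x y)
    (ε : ℝ) (hε : 0 < ε)
    (h : dist x y + dist u v - ε * dist x y ≤ dist x v + dist u y)
    (f : M → ℝ)
    (hf : ∀ p, f p = min (dist y p) (dist v p + dist y u - dist u v)
          - min (dist y z) (dist v z + dist y u - dist u v)) :
    f z = 0 ∧ LipschitzWith 1 f ∧
      (1 - ε) * dist x y ≤ f x - f y ∧ f u - f v = dist u v :=
  stmt0_general z x y u v ε hε h f hf
end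

section
/- Let M be a metric space, u, v ∈ M, and r, s, δ > 0 be such that [u,v]_δ ⊆ B(u,r) ∪ B(v,s), where [u,v]_δ = { p : d(u,p) + d(v,p) < d(u,v) + δ } and B denotes closed balls. Then for every ε > 0 there exist δ' > 0, x ∈ B(u,r), and y ∈ B(v,s) such that: (1) d(u,x) + d(v,y) + d(x,y) < d(u,v) + δ; (2) [x,y]_{δ'} ⊆ [u,v]_δ; (3) d(x,y) ≤ d(u,v); (4) [x,y]_{δ'} ⊆ B(x,ε) ∪ B(y,ε). -/
/-! Minimise `d(x,y) + κ · (d(u,x) + d(x,y) + d(y,v))` up to a small error `η` over pairs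
`x ∈ B(u,r)`, `y ∈ B(v,s)` with `d(x,y) ≤ d(u,v)`. For large `κ` the broken path `u, x, y, v` of
an almost minimiser is almost geodesic, which gives (1)–(3). A point `p ∈ [x,y]_{δ'}` lies in
`B(u,r)` or `B(v,s)`; if it were `ε`-far from both `x` and `y`, replacing `x` (resp. `y`) by `p`
would lower the cost by about `ε`, more than `η`, which gives (4). -/

open Metric

lemma exists_forall_lt_add_of_bddBelow {α : Type*} {S : Set α} {f : α → ℝ} (hS : S.Nonempty)
    (hf : BddBelow (f '' S)) {η : ℝ} (hη : 0 < η) : ∃ a ∈ S, ∀ b ∈ S, f a < f b + η := by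
  obtain ⟨_, ⟨a, ha, rfl⟩, hlt⟩ := Real.lt_sInf_add_pos (hS.image f) hη
  exact ⟨a, ha, fun b hb => hlt.trans_le (by gcongr; exact csInf_le hf ⟨b, hb, rfl⟩)⟩

namespace ThickSegment

variable {M : Type*} [PseudoMetricSpace M]

/-- The paper's `[u,v]_δ`. -/
def thickSegment (u v : M) (δ : ℝ) : Set M :=
  {p | dist u p + dist v p < dist u v + δ}

def brokenLength (u v x y : M) : ℝ :=
  dist u x + dist v y + dist x y

def cost (κ : ℝ) (u v x y : M) : ℝ :=
  dist x y + κ * brokenLength u v x y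

lemma brokenLength_self (u v : M) : brokenLength u v u v = dist u v := by
  simp [brokenLength]

lemma cost_nonneg {κ : ℝ} (hκ : 0 ≤ κ) (u v x y : M) : 0 ≤ cost κ u v x y := by
  unfold cost brokenLength
  positivity

lemma thickSegment_subset_of_brokenLength_add_le {u v x y : M} {δ δ' : ℝ}
    (h : brokenLength u v x y + δ' ≤ dist u v + δ) :
    thickSegment x y δ' ⊆ thickSegment u v δ := by
  intro p hp
  simp only [thickSegment, brokenLength, Set.mem_ofPred_eq] at *
  linarith [dist_triangle u x p, dist_triangle v y p]

lemma brokenLength_le_of_cost_lt {κ η : ℝ} (hκ : 0 < κ) {u v x y : M}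
    (h : cost κ u v x y < cost κ u v u v + η) :
    brokenLength u v x y ≤ dist u v + (dist u v + η) / κ := by
  rw [cost, cost, brokenLength_self] at h
  rw [← sub_le_iff_le_add', le_div_iff₀ hκ]
  nlinarith [dist_nonneg (x := x) (y := y)]

lemma cost_add_dist_lt_of_mem_left {κ δ' : ℝ} (hκ : 0 ≤ κ) {u v x y p : M}
    (hp : p ∈ thickSegment x y δ') :
    cost κ u v p y + dist x p < cost κ u v x y + (1 + κ) * δ' := by
  have hlen : brokenLength u v p y ≤ brokenLength u v x y + δ' := by
    simp only [thickSegment, brokenLength, Set.mem_ofPred_eq] at *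
    linarith [dist_triangle u x p, dist_comm p y]
  have := mul_le_mul_of_nonneg_left hlen hκ
  simp only [thickSegment, cost, Set.mem_ofPred_eq] at *
  linarith [dist_comm p y]

lemma cost_add_dist_lt_of_mem_right {κ δ' : ℝ} (hκ : 0 ≤ κ) {u v x y p : M}
    (hp : p ∈ thickSegment x y δ') :
    cost κ u v x p + dist y p < cost κ u v x y + (1 + κ) * δ' := by
  have hlen : brokenLength u v x p ≤ brokenLength u v x y + δ' := by
    simp only [thickSegment, brokenLength, Set.mem_ofPred_eq] at *
    linarith [dist_triangle v y p]
  have := mul_le_mul_of_nonneg_left hlen hκ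
  simp only [thickSegment, cost, Set.mem_ofPred_eq] at *
  linarith

lemma thickSegment_subset_closedBall_union_of_almost_minimal {κ η δ' ε r s : ℝ}
    (hκ : 0 ≤ κ) (hη : 0 ≤ η) (hε : (1 + κ) * δ' + η ≤ ε) {u v x y : M}
    (hmin : ∀ x' ∈ closedBall u r, ∀ y' ∈ closedBall v s, dist x' y' ≤ dist u v →
      cost κ u v x y < cost κ u v x' y' + η)
    (hx : x ∈ closedBall u r) (hy : y ∈ closedBall v s) (hxy : dist x y ≤ dist u v)
    (hseg : thickSegment x y δ' ⊆ closedBall u r ∪ closedBall v s) :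
    thickSegment x y δ' ⊆ closedBall x ε ∪ closedBall y ε := by
  intro p hp
  by_contra hfar
  simp only [Set.mem_union, mem_closedBall, not_or, not_le, dist_comm p] at hfar
  obtain ⟨hxp, hyp⟩ := hfar
  have hp' : dist x p + dist y p < dist x y + δ' := hp
  have hδ'ε : δ' ≤ ε := by nlinarith [dist_triangle x p y, dist_comm p y]
  rcases hseg hp with hpu | hpv
  · have := hmin p hpu y hy (by linarith [dist_comm p y])
    linarith [cost_add_dist_lt_of_mem_left (u := u) (v := v) hκ hp]
  · have := hmin x hx p hpv (by linarith)
    linarith [cost_add_dist_lt_of_mem_right (u := u) (v := v) hκ hp]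

end ThickSegment

open ThickSegment

/-- Lemma `emptyset`: if `[u,v]_δ ⊆ B(u,r) ∪ B(v,s)`, then for every
`ε > 0` there are `δ' > 0`, `x ∈ B(u,r)` and `y ∈ B(v,s)` satisfying conditions
(1)-(4) of the lemma. -/
theorem stmt3 {M : Type*} [MetricSpace M] (u v : M) (r s δ : ℝ)
    (hr : 0 < r) (hs : 0 < s) (hδ : 0 < δ)
    (hseg : ∀ p : M, dist u p + dist v p < dist u v + δ →
      p ∈ Metric.closedBall u r ∪ Metric.closedBall v s) :
    ∀ ε > (0 : ℝ), ∃ δ' > (0 : ℝ), ∃ x ∈ Metric.closedBall u r,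
      ∃ y ∈ Metric.closedBall v s,
        dist u x + dist v y + dist x y < dist u v + δ ∧
        (∀ p : M, dist x p + dist y p < dist x y + δ' →
          dist u p + dist v p < dist u v + δ) ∧
        dist x y ≤ dist u v ∧
        (∀ p : M, dist x p + dist y p < dist x y + δ' →
          p ∈ Metric.closedBall x ε ∪ Metric.closedBall y ε) := by
  intro ε hε
  set D := dist u v
  set κ := 2 * (D + δ) / δ
  have hκ : 0 < κ := by positivity
  have hκδ : κ * δ = 2 * (D + δ) := div_mul_cancel₀ _ hδ.ne'
  set δ' := min δ ε / (2 * (1 + κ))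
  have hδ' : 0 < δ' := by positivity
  have hδ'_eq : 2 * (1 + κ) * δ' = min δ ε := mul_div_cancel₀ _ (by positivity)
  have hδ'_le : 2 * (1 + κ) * δ' ≤ δ := hδ'_eq ▸ min_le_left δ ε
  have hδ'_half : δ' ≤ δ / 2 := by nlinarith
  set S : Set (M × M) := {q | q.1 ∈ closedBall u r ∧ q.2 ∈ closedBall v s ∧ dist q.1 q.2 ≤ D}
  have huv : (u, v) ∈ S := ⟨mem_closedBall_self hr.le, mem_closedBall_self hs.le, le_rfl⟩
  obtain ⟨⟨x, y⟩, ⟨hx, hy, hxy⟩, hmin⟩ :=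
    exists_forall_lt_add_of_bddBelow (f := fun q => cost κ u v q.1 q.2) ⟨_, huv⟩
      ⟨0, by rintro _ ⟨q, -, rfl⟩; exact cost_nonneg hκ.le _ _ _ _⟩ (by positivity : 0 < (1 + κ) * δ')
  dsimp only at hx hy hxy hmin
  have hlen : brokenLength u v x y ≤ D + δ / 2 := by
    have h := brokenLength_le_of_cost_lt hκ (hmin _ huv)
    have : (D + (1 + κ) * δ') / κ ≤ δ / 2 := by
      rw [div_le_iff₀ hκ]
      nlinarith
    linarith
  refine ⟨δ', hδ', x, hx, y, hy, by unfold brokenLength at hlen; linarith,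
    thickSegment_subset_of_brokenLength_add_le (by linarith), hxy,
    thickSegment_subset_closedBall_union_of_almost_minimal hκ.le (by positivity)
      (by linarith [min_le_right δ ε]) (fun x' hx' y' hy' h => hmin (x', y') ⟨hx', hy', h⟩)
      hx hy hxy fun p hp => hseg p (thickSegment_subset_of_brokenLength_add_le (by linarith) hp)⟩
end

section
/- Let M be a complete metric space, u, v ∈ M, and r, s, δ > 0 with r + s < d(u,v) such that [u,v]_δ ⊆ B(u,r) ∪ B(v,s). Then there exist x ∈ B(u,r) and y ∈ B(v,s) with x ≠ y such that for every ε > 0 there exists γ > 0 with [x,y]_γ ⊆ B(x,ε) ∪ B(y,ε). -/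
/-!
Apply Ekeland's variational principle, with slope `l < 1`, to `(x, y) ↦ d(x, y)` on
`B(u, r) × B(v, s)` with the `ℓ¹` product metric, starting from `(u, v)`. The resulting pair
satisfies `d(x, y) + l (d(u, x) + d(v, y)) ≤ d(u, v)`, so `[x, y]_γ ⊆ [u, v]_δ` once
`(1 - l)(r + s) + γ ≤ δ`. A point `p ∈ [x, y]_γ` therefore lies in `B(u, r)`, say, and comparing
`(x, y)` with the competitor `(p, y)` gives `(1 - l) d(x, p) < γ`. The balls are disjoint since
`r + s < d(u, v)`, so `x ≠ y`.
-/

open Filter Topology Metric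

theorem exists_mem_forall_le_add {α : Type*} {f : α → ℝ} {s : Set α} (hs : s.Nonempty)
    (hf : BddBelow (f '' s)) {ε : ℝ} (hε : 0 < ε) : ∃ z ∈ s, ∀ w ∈ s, f z ≤ f w + ε := by
  obtain ⟨_, ⟨z, hz, rfl⟩, hlt⟩ :=
    exists_lt_of_csInf_lt (hs.image f) (lt_add_of_pos_right (sInf (f '' s)) hε)
  exact ⟨z, hz, fun w hw => by linarith [csInf_le hf (Set.mem_image_of_mem f hw)]⟩

section Ekeland

variable {X : Type*} [MetricSpace X]

def ekelandSet (f : X → ℝ) (l : ℝ) (z : X) : Set X :=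
  {w | f w + l * dist z w ≤ f z}

variable {f : X → ℝ} {l : ℝ}

theorem self_mem_ekelandSet (z : X) : z ∈ ekelandSet f l z := by
  simp [ekelandSet]

theorem ekelandSet_subset (hl : 0 ≤ l) {z w : X} (hw : w ∈ ekelandSet f l z) :
    ekelandSet f l w ⊆ ekelandSet f l z := fun w' hw' => by
  have := mul_le_mul_of_nonneg_left (dist_triangle z w w') hl
  simp only [ekelandSet, Set.mem_ofPred_eq] at hw hw' ⊢
  linarith

theorem isClosed_ekelandSet (hf : LowerSemicontinuous f) (l : ℝ) (z : X) :
    IsClosed (ekelandSet f l z) :=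
  (hf.add (continuous_const.mul (continuous_const.dist continuous_id)).lowerSemicontinuous
    ).isClosed_preimage (f z)

theorem dist_le_of_mem_ekelandSet (hl : 0 < l) {z w : X} {ε : ℝ}
    (hz : ∀ w' ∈ ekelandSet f l z, f z ≤ f w' + l * ε) (hw : w ∈ ekelandSet f l z) :
    dist z w ≤ ε := by
  have := hz w hw
  simp only [ekelandSet, Set.mem_ofPred_eq] at hw
  exact le_of_mul_le_mul_left (by linarith) hl

theorem LowerSemicontinuous.exists_forall_lt_add_mul_dist [CompleteSpace X]
    (hf : LowerSemicontinuous f) (hbdd : BddBelow (Set.range f)) (hl : 0 < l) (x₀ : X) :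
    ∃ z, f z + l * dist x₀ z ≤ f x₀ ∧ ∀ w ≠ z, f z < f w + l * dist z w := by
  set S := ekelandSet f l
  have step : ∀ (n : ℕ) (z : X), ∃ z' ∈ S z, ∀ w ∈ S z, f z' ≤ f w + l * (1 / 2) ^ n :=
    fun n z => exists_mem_forall_le_add ⟨z, self_mem_ekelandSet z⟩
      (hbdd.mono (Set.image_subset_range f _)) (by positivity)
  choose next next_mem next_le using step
  let zs : ℕ → X := fun n => Nat.rec x₀ next n
  have anti : Antitone (S ∘ zs) :=
    antitone_nat_of_succ_le fun n => ekelandSet_subset hl.le (next_mem n (zs n))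
  have mem : ∀ n m, n ≤ m → zs m ∈ S (zs n) := fun n m h => anti h (self_mem_ekelandSet _)
  have small : ∀ n, ∀ w ∈ S (zs (n + 1)), dist (zs (n + 1)) w ≤ (1 / 2) ^ n :=
    fun n _ => dist_le_of_mem_ekelandSet hl fun w hw => next_le n (zs n) w (anti n.le_succ hw)
  have cauchy : CauchySeq zs := by
    refine Metric.cauchySeq_iff'.2 fun ε hε => ?_
    obtain ⟨N, hN⟩ := exists_pow_lt_of_lt_one hε (by norm_num : (1 / 2 : ℝ) < 1)
    exact ⟨N + 1, fun n hn => by rw [dist_comm]; exact (small N _ (mem _ _ hn)).trans_lt hN⟩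
  obtain ⟨z, hz⟩ := cauchySeq_tendsto_of_complete cauchy
  have z_mem : ∀ n, z ∈ S (zs n) := fun n =>
    (isClosed_ekelandSet hf l _).mem_of_tendsto hz (eventually_atTop.2 ⟨n, mem n⟩)
  have eq_of_mem : ∀ w ∈ S z, w = z := by
    intro w hw
    have : Tendsto (fun n => zs (n + 1)) atTop (𝓝 w) :=
      tendsto_iff_dist_tendsto_zero.2 <| squeeze_zero (fun _ => dist_nonneg)
        (fun n => small n w (ekelandSet_subset hl.le (z_mem (n + 1)) hw))
        (tendsto_pow_atTop_nhds_zero_of_lt_one (by norm_num) (by norm_num))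
    exact tendsto_nhds_unique this (hz.comp (tendsto_add_atTop_nat 1))
  exact ⟨z, z_mem 0, fun w hw => lt_of_not_ge fun h => hw (eq_of_mem w h)⟩

end Ekeland

theorem WithLp.prod_dist_eq_of_L1' {α β : Type*} [PseudoMetricSpace α] [PseudoMetricSpace β]
    (x y : WithLp 1 (α × β)) : dist x y = dist x.fst y.fst + dist x.snd y.snd := by
  rw [WithLp.prod_dist_eq_add (by norm_num)]
  norm_num

theorem exists_pair_forall_dist_le_add {M : Type*} [MetricSpace M] [CompleteSpace M]
    {A B : Set M} (hA : IsClosed A) (hB : IsClosed B) {u v : M} (hu : u ∈ A) (hv : v ∈ B)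
    {l : ℝ} (hl : 0 < l) :
    ∃ x ∈ A, ∃ y ∈ B, dist x y + l * (dist u x + dist v y) ≤ dist u v ∧
      ∀ x' ∈ A, ∀ y' ∈ B, dist x y ≤ dist x' y' + l * (dist x x' + dist y y') := by
  let K : Set (WithLp 1 (M × M)) := WithLp.ofLp ⁻¹' A ×ˢ B
  have : CompleteSpace K :=
    ((hA.prod hB).preimage (WithLp.prod_continuous_ofLp 1 M M)).completeSpace_coe
  let f : K → ℝ := fun z => dist z.1.fst z.1.snd
  have hf : Continuous f := by fun_prop
  obtain ⟨z, hz₀, hz⟩ := hf.lowerSemicontinuous.exists_forall_lt_add_mul_dist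
    ⟨0, by rintro _ ⟨_, rfl⟩; exact dist_nonneg⟩ hl ⟨WithLp.toLp 1 (u, v), hu, hv⟩
  refine ⟨_, z.2.1, _, z.2.2, by simpa [f, Subtype.dist_eq, WithLp.prod_dist_eq_of_L1'] using hz₀,
    fun x' hx' y' hy' => ?_⟩
  let w : K := ⟨WithLp.toLp 1 (x', y'), hx', hy'⟩
  obtain rfl | hw := eq_or_ne w z
  · simp [w]
  · simpa [f, w, Subtype.dist_eq, WithLp.prod_dist_eq_of_L1'] using (hz w hw).le

theorem dist_lt_of_dist_le_add_mul {M : Type*} [PseudoMetricSpace M] {x y p : M} {l ε : ℝ}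
    (hl : l < 1) (hmin : dist x y ≤ dist p y + l * dist x p)
    (hp : dist x p + dist y p < dist x y + (1 - l) * ε) : dist x p < ε := by
  rw [dist_comm p y] at hmin
  exact lt_of_mul_lt_mul_left (by linarith) (sub_nonneg.2 hl.le)

theorem mem_closedBall_union_of_dist_le_add_mul {M : Type*} [PseudoMetricSpace M]
    {A B : Set M} {x y p : M} {l ε : ℝ} (hx : x ∈ A) (hy : y ∈ B) (hl : l < 1)
    (hmin : ∀ x' ∈ A, ∀ y' ∈ B, dist x y ≤ dist x' y' + l * (dist x x' + dist y y'))
    (hpAB : p ∈ A ∪ B) (hp : dist x p + dist y p < dist x y + (1 - l) * ε) :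
    p ∈ closedBall x ε ∪ closedBall y ε := by
  rcases hpAB with hpA | hpB
  · refine .inl (mem_closedBall'.2 (dist_lt_of_dist_le_add_mul (y := y) hl ?_ hp).le)
    simpa using hmin p hpA y hy
  · refine .inr (mem_closedBall'.2 (dist_lt_of_dist_le_add_mul (y := x) hl ?_ ?_).le)
    · simpa [dist_comm] using hmin x hx p hpB
    · linarith [dist_comm x y]

/-- Lemma `lemma_dent`: if `M` is complete, `r + s < d(u,v)` and
`[u,v]_δ ⊆ B(u,r) ∪ B(v,s)`, then there are `x ∈ B(u,r)`, `y ∈ B(v,s)`, `x ≠ y`,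
such that for every `ε > 0` some `γ > 0` gives `[x,y]_γ ⊆ B(x,ε) ∪ B(y,ε)`. -/
theorem stmt4 {M : Type*} [MetricSpace M] [CompleteSpace M] (u v : M)
    (r s δ : ℝ) (hr : 0 < r) (hs : 0 < s) (hδ : 0 < δ)
    (hrs : r + s < dist u v)
    (hseg : ∀ p : M, dist u p + dist v p < dist u v + δ →
      p ∈ Metric.closedBall u r ∪ Metric.closedBall v s) :
    ∃ x ∈ Metric.closedBall u r, ∃ y ∈ Metric.closedBall v s, x ≠ y ∧
      ∀ ε > (0 : ℝ), ∃ γ > (0 : ℝ), ∀ p : M,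
        dist x p + dist y p < dist x y + γ →
        p ∈ Metric.closedBall x ε ∪ Metric.closedBall y ε := by
  -- `(1 - l) (r + s + δ) = δ`, which is exactly the slack needed for `[x, y]_γ ⊆ [u, v]_δ`.
  set l := (r + s) / (r + s + δ) with hl_def
  have hl : 0 < l := by positivity
  have hl₁ : l < 1 := (div_lt_one (by positivity)).2 (by linarith)
  have hlδ : (1 - l) * (r + s) = l * δ := by rw [hl_def]; field_simp; ring
  obtain ⟨x, hx, y, hy, hdescent, hmin⟩ := exists_pair_forall_dist_le_add
    isClosed_closedBall isClosed_closedBall (mem_closedBall_self (x := u) hr.le)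
    (mem_closedBall_self (x := v) hs.le) hl
  have hux : dist u x ≤ r := mem_closedBall'.1 hx
  have hvy : dist v y ≤ s := mem_closedBall'.1 hy
  refine ⟨x, hx, y, hy, ?_, fun ε hε => ⟨(1 - l) * min δ ε, mul_pos (by linarith) (lt_min hδ hε),
    fun p hp => mem_closedBall_union_of_dist_le_add_mul hx hy hl₁ hmin (hseg p ?_) ?_⟩⟩
  · rintro rfl
    linarith [dist_triangle_right u v x]
  · have : (1 - l) * (dist u x + dist v y + min δ ε) ≤ (1 - l) * (r + s + δ) :=
      mul_le_mul_of_nonneg_left (by linarith [min_le_left δ ε]) (by linarith)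
    linarith [dist_triangle u x p, dist_triangle v y p]
  · have : (1 - l) * min δ ε ≤ (1 - l) * ε :=
      mul_le_mul_of_nonneg_left (min_le_right δ ε) (by linarith)
    linarith
end

section
/- Let M be the metric space with points ⋃_{n≥0} S_n, where S_0 = {(0,0),(1,0)} and S_n = { (k/2^n, 1/2^n) : 0 ≤ k ≤ 2^n }, and metric d((a₁,b₁),(a₂,b₂)) = |a₁ − a₂| if b₁ = b₂ and min{a₁ + a₂, 2 − a₁ − a₂} + |b₁ − b₂| otherwise. Then M is a complete metric space. -/
/-! For a corner `(a, 0)`, `a ∈ {0, 1}`, the distance to it is `|x - a| + y`, and the triangle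
inequality through the corner holds on the whole space; hence a Cauchy sequence that comes
arbitrarily close to a corner infinitely often converges to it. Otherwise the sequence eventually
stays `ε`-far from both corners. Distinct levels being a factor two apart, two such points on
different levels are `ε/2`-far, so the sequence eventually stays on one level `y = 2⁻ⁿ`, where
distinct points are `2⁻ⁿ` apart, and is therefore eventually constant. -/

/-- The distance of Example 3.1. -/
noncomputable def exDist (p q : ℝ × ℝ) : ℝ :=
  if p.2 = q.2 then |p.1 - q.1|
  else min (p.1 + q.1) (2 - p.1 - q.1) + |p.2 - q.2|

/-- The point set of Example 3.1: `S₀ = {(0,0),(1,0)}` together with the levels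
`Sₙ = {(k/2ⁿ, 1/2ⁿ) : 0 ≤ k ≤ 2ⁿ}` for `n ≥ 1`. -/
def exDomain : Set (ℝ × ℝ) :=
  {((0 : ℝ), (0 : ℝ)), ((1 : ℝ), (0 : ℝ))} ∪
    ⋃ n : ℕ, {p | ∃ k : ℕ, k ≤ 2 ^ (n + 1) ∧
      p = ((k : ℝ) / 2 ^ (n + 1), 1 / 2 ^ (n + 1))}

section CauchyWrt

variable {α β : Type*} (d : α → α → ℝ)

def CauchyWrt (u : ℕ → α) : Prop :=
  ∀ ε > (0 : ℝ), ∃ N : ℕ, ∀ m ≥ N, ∀ n ≥ N, d (u m) (u n) < ε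

def TendstoWrt (u : ℕ → α) (l : α) : Prop :=
  ∀ ε > (0 : ℝ), ∃ N : ℕ, ∀ n ≥ N, d (u n) l < ε

variable {d}

theorem CauchyWrt.tendstoWrt_of_frequently_lt {u : ℕ → α} {l : α} (hu : CauchyWrt d u)
    (htri : ∀ m n, d (u m) l ≤ d (u m) (u n) + d (u n) l)
    (hfreq : ∀ ε > (0 : ℝ), ∀ N : ℕ, ∃ n ≥ N, d (u n) l < ε) : TendstoWrt d u l := by
  intro ε hε
  obtain ⟨N, hN⟩ := hu (ε / 2) (half_pos hε)
  obtain ⟨n₀, hn₀, hl⟩ := hfreq (ε / 2) (half_pos hε) N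
  exact ⟨N, fun n hn => by linarith [hN n hn n₀ hn₀, htri n n₀]⟩

theorem tendstoWrt_of_eventually_eq {u : ℕ → α} {l : α} (hl : d l l = 0) {N : ℕ}
    (hN : ∀ n ≥ N, u n = l) : TendstoWrt d u l :=
  fun ε hε => ⟨N, fun n hn => by rwa [hN n hn, hl]⟩

theorem CauchyWrt.exists_comp_eventually_const {u : ℕ → α} (hu : CauchyWrt d u) (f : α → β)
    {δ : ℝ} (hδ : 0 < δ) {N : ℕ}
    (hf : ∀ m ≥ N, ∀ n ≥ N, d (u m) (u n) < δ → f (u m) = f (u n)) :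
    ∃ N' ≥ N, ∀ n ≥ N', f (u n) = f (u N') := by
  obtain ⟨M, hM⟩ := hu δ hδ
  refine ⟨max N M, le_max_left _ _, fun n hn => hf n ?_ _ (le_max_left _ _)
    (hM n ?_ _ (le_max_right _ _))⟩
  all_goals omega

end CauchyWrt

theorem exDomain_cases {p : ℝ × ℝ} (hp : p ∈ exDomain) :
    p = (0, 0) ∨ p = (1, 0) ∨
      ∃ n k : ℕ, k ≤ 2 ^ (n + 1) ∧ p = ((k : ℝ) / 2 ^ (n + 1), 1 / 2 ^ (n + 1)) := by
  simpa [exDomain, or_assoc] using hp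

theorem exDomain_bounds {p : ℝ × ℝ} (hp : p ∈ exDomain) : 0 ≤ p.1 ∧ p.1 ≤ 1 ∧ 0 ≤ p.2 := by
  rcases exDomain_cases hp with rfl | rfl | ⟨n, k, hk, rfl⟩
  · norm_num
  · norm_num
  · exact ⟨by positivity, (div_le_one (by positivity)).mpr (by exact_mod_cast hk), by positivity⟩

theorem exDomain_eq_corner_of_snd_eq_zero {p : ℝ × ℝ} (hp : p ∈ exDomain) (h : p.2 = 0) :
    p = (0, 0) ∨ p = (1, 0) := by
  rcases exDomain_cases hp with hp | hp | ⟨n, k, -, rfl⟩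
  · exact Or.inl hp
  · exact Or.inr hp
  · simp at h

theorem exDomain_exists_fst_eq_nat_mul_snd {p : ℝ × ℝ} (hp : p ∈ exDomain) (h : p.2 ≠ 0) :
    ∃ k : ℕ, p.1 = k * p.2 := by
  rcases exDomain_cases hp with rfl | rfl | ⟨n, k, -, rfl⟩
  · simp at h
  · simp at h
  · exact ⟨k, (mul_one_div _ _).symm⟩

theorem two_mul_one_div_two_pow_le {a b : ℕ} (h : a < b) :
    2 * (1 / 2 ^ b : ℝ) ≤ 1 / 2 ^ a := by
  rw [mul_one_div, div_le_div_iff₀ (by positivity) (by positivity), one_mul, ← pow_succ']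
  exact pow_le_pow_right₀ (by norm_num) h

theorem exDomain_snd_le_two_mul_abs_sub {p q : ℝ × ℝ} (hp : p ∈ exDomain) (hq : q ∈ exDomain)
    (h : p.2 ≠ q.2) : q.2 ≤ 2 * |p.2 - q.2| := by
  have hlevel : ∀ {r : ℝ × ℝ}, r ∈ exDomain → r.2 = 0 ∨ ∃ n : ℕ, r.2 = 1 / 2 ^ (n + 1) := by
    intro r hr
    rcases exDomain_cases hr with rfl | rfl | ⟨n, k, -, rfl⟩ <;> simp
  have hq0 := (exDomain_bounds hq).2.2
  rcases hlevel hq with hq' | ⟨b, hb⟩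
  · rw [hq']; positivity
  rcases hlevel hp with hp' | ⟨a, ha⟩
  · rw [hp', zero_sub, abs_neg, abs_of_nonneg hq0]; linarith
  rw [ha, hb] at h ⊢
  rcases lt_or_gt_of_ne (fun hab : a = b => h (by rw [hab])) with hab | hab
  · have := two_mul_one_div_two_pow_le (show a + 1 < b + 1 by omega)
    have : (0 : ℝ) < 1 / 2 ^ (b + 1) := by positivity
    rw [abs_of_pos (by linarith)]; linarith
  · have := two_mul_one_div_two_pow_le (show b + 1 < a + 1 by omega)
    have : (0 : ℝ) < 1 / 2 ^ (a + 1) := by positivity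
    rw [abs_of_neg (by linarith)]; linarith

theorem exDist_self (p : ℝ × ℝ) : exDist p p = 0 := by
  simp [exDist]

theorem exDist_corner {p : ℝ × ℝ} (hp : p ∈ exDomain) {a : ℝ} (ha : a = 0 ∨ a = 1) :
    exDist p (a, 0) = |p.1 - a| + p.2 := by
  obtain ⟨h0, h1, h2⟩ := exDomain_bounds hp
  unfold exDist
  split_ifs with h
  · simp [h]
  · rw [sub_zero, abs_of_nonneg h2]
    rcases ha with rfl | rfl
    · rw [min_eq_left (by linarith), sub_zero, add_zero, abs_of_nonneg h0]
    · rw [min_eq_right (by linarith), abs_of_nonpos (by linarith)]; ring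

theorem exDist_corner_le_add {p q : ℝ × ℝ} (hp : p ∈ exDomain) (hq : q ∈ exDomain) {a : ℝ}
    (ha : a = 0 ∨ a = 1) : exDist p (a, 0) ≤ exDist p q + exDist q (a, 0) := by
  obtain ⟨hp0, hp1, -⟩ := exDomain_bounds hp
  obtain ⟨hq0, hq1, -⟩ := exDomain_bounds hq
  rw [exDist_corner hp ha, exDist_corner hq ha, exDist]
  split_ifs with h
  · linarith [abs_sub_le p.1 q.1 a, h]
  · have hfst : |p.1 - a| ≤ min (p.1 + q.1) (2 - p.1 - q.1) + |q.1 - a| := by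
      rcases ha with rfl | rfl
      · rw [sub_zero, sub_zero, abs_of_nonneg hp0, abs_of_nonneg hq0]
        linarith [le_min (show p.1 - q.1 ≤ p.1 + q.1 by linarith)
          (show p.1 - q.1 ≤ 2 - p.1 - q.1 by linarith)]
      · rw [abs_of_nonpos (by linarith), abs_of_nonpos (by linarith)]
        linarith [le_min (show q.1 - p.1 ≤ p.1 + q.1 by linarith)
          (show q.1 - p.1 ≤ 2 - p.1 - q.1 by linarith)]
    linarith [abs_sub_abs_le_abs_sub p.2 q.2, le_abs_self (p.2 - q.2)]

theorem min_exDist_corner_le_two_mul_exDist {p q : ℝ × ℝ} (hp : p ∈ exDomain)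
    (hq : q ∈ exDomain) (h : p.2 ≠ q.2) :
    min (exDist q (0, 0)) (exDist q (1, 0)) ≤ 2 * exDist p q := by
  obtain ⟨hp0, hp1, -⟩ := exDomain_bounds hp
  obtain ⟨hq0, hq1, -⟩ := exDomain_bounds hq
  rw [exDist_corner hq (Or.inl rfl), exDist_corner hq (Or.inr rfl), exDist, if_neg h,
    sub_zero, abs_of_nonneg hq0, abs_of_nonpos (by linarith)]
  have := exDomain_snd_le_two_mul_abs_sub hp hq h
  rcases min_cases (p.1 + q.1) (2 - p.1 - q.1) with ⟨hm, -⟩ | ⟨hm, -⟩ <;> rw [hm]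
  · exact (min_le_left _ _).trans (by linarith)
  · exact (min_le_right _ _).trans (by linarith)

theorem eq_of_exDist_lt_snd {p q : ℝ × ℝ} (hp : p ∈ exDomain) (hq : q ∈ exDomain)
    (h : p.2 = q.2) (hd : exDist p q < q.2) : p = q := by
  rw [exDist, if_pos h] at hd
  have hq2 : q.2 ≠ 0 := (lt_of_le_of_lt (abs_nonneg _) hd).ne'
  obtain ⟨j, hj⟩ := exDomain_exists_fst_eq_nat_mul_snd hp (h ▸ hq2)
  obtain ⟨k, hk⟩ := exDomain_exists_fst_eq_nat_mul_snd hq hq2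
  have hq2pos : 0 < q.2 := lt_of_le_of_ne (exDomain_bounds hq).2.2 hq2.symm
  rw [hj, hk, h, ← sub_mul, abs_mul, abs_of_pos hq2pos] at hd
  obtain ⟨hj_lt, hk_lt⟩ := abs_sub_lt_iff.mp ((mul_lt_iff_lt_one_left hq2pos).mp hd)
  have hjk : j = k := by
    have : j < k + 1 := by exact_mod_cast (by linarith : (j : ℝ) < k + 1)
    have : k < j + 1 := by exact_mod_cast (by linarith : (k : ℝ) < j + 1)
    omega
  exact Prod.ext (by rw [hj, hk, h, hjk]) h

theorem exists_eventually_const_of_far_from_corners {u : ℕ → ℝ × ℝ} (hu : ∀ n, u n ∈ exDomain)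
    (hcau : CauchyWrt exDist u) {ε : ℝ} (hε : 0 < ε) {N : ℕ}
    (hfar : ∀ n ≥ N, ε ≤ min (exDist (u n) (0, 0)) (exDist (u n) (1, 0))) :
    ∃ N', ∀ n ≥ N', u n = u N' := by
  obtain ⟨N₁, hN₁, hlevel⟩ := hcau.exists_comp_eventually_const Prod.snd (half_pos hε) (N := N)
    fun m _ n hn hd => by_contra fun h => by
      linarith [min_exDist_corner_le_two_mul_exDist (hu m) (hu n) h, hfar n hn]
  have hb : 0 < (u N₁).2 := by
    refine (exDomain_bounds (hu N₁)).2.2.lt_of_ne fun h => ?_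
    have hfarN₁ := hfar N₁ hN₁
    rcases exDomain_eq_corner_of_snd_eq_zero (hu N₁) h.symm with hc | hc <;>
      rw [hc, exDist_self] at hfarN₁
    · linarith [min_le_left (0 : ℝ) (exDist (0, 0) (1, 0))]
    · linarith [min_le_right (exDist (1, 0) (0, 0)) (0 : ℝ)]
  obtain ⟨N₂, -, hN₂⟩ := hcau.exists_comp_eventually_const id hb (N := N₁)
    fun m hm n hn hd => eq_of_exDist_lt_snd (hu m) (hu n)
      ((hlevel m hm).trans (hlevel n hn).symm) ((hlevel n hn).symm ▸ hd)
  exact ⟨N₂, hN₂⟩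

/-- the metric space `(exDomain, exDist)` is complete: every Cauchy
sequence of points of `exDomain` converges (with respect to `exDist`) to a point
of `exDomain`. -/
theorem stmt6 :
    ∀ u : ℕ → ℝ × ℝ, (∀ n, u n ∈ exDomain) →
      (∀ ε > (0 : ℝ), ∃ N : ℕ, ∀ m ≥ N, ∀ n ≥ N, exDist (u m) (u n) < ε) →
      ∃ l ∈ exDomain, ∀ ε > (0 : ℝ), ∃ N : ℕ, ∀ n ≥ N, exDist (u n) l < ε := by
  intro u hu hcau
  by_cases hnear : ∃ a : ℝ, (a = 0 ∨ a = 1) ∧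
      ∀ ε > (0 : ℝ), ∀ N : ℕ, ∃ n ≥ N, exDist (u n) (a, 0) < ε
  · obtain ⟨a, ha, hfreq⟩ := hnear
    refine ⟨(a, 0), Or.inl (by rcases ha with rfl | rfl <;> simp), ?_⟩
    exact CauchyWrt.tendstoWrt_of_frequently_lt hcau
      (fun m n => exDist_corner_le_add (hu m) (hu n) ha) hfreq
  push Not at hnear
  obtain ⟨ε₀, hε₀, N₀, hN₀⟩ := hnear 0 (Or.inl rfl)
  obtain ⟨ε₁, hε₁, N₁, hN₁⟩ := hnear 1 (Or.inr rfl)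
  obtain ⟨N, hN⟩ := exists_eventually_const_of_far_from_corners hu hcau (lt_min hε₀ hε₁)
    (N := max N₀ N₁) fun n hn => min_le_min (hN₀ n (le_of_max_le_left hn))
      (hN₁ n (le_of_max_le_right hn))
  exact ⟨u N, hu N, tendstoWrt_of_eventually_eq (exDist_self _) hN⟩
end

section
/- Let M be the metric space ⋃_{n≥0} S_n with S_0 = {(0,0),(1,0)}, S_n = { (k/2^n, 1/2^n) : 0 ≤ k ≤ 2^n }, and metric d((a₁,b₁),(a₂,b₂)) = |a₁ − a₂| if b₁ = b₂ and min{a₁+a₂, 2−a₁−a₂} + |b₁−b₂| otherwise. Let x = (0,0) and y = (1,0). Then for every n ∈ ℕ, the point z := (1/2, 1/2^{n+2}) satisfies d(x,z) + d(y,z) < d(x,y) + 1/2^n but z ∉ B(x, 1/2) ∪ B(y, 1/2). -/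
lemma exDist_same_snd (a b c : ℝ) : exDist (a, c) (b, c) = |a - b| :=
  if_pos rfl

lemma exDist_of_snd_ne {p q : ℝ × ℝ} (h : p.2 ≠ q.2) :
    exDist p q = min (p.1 + q.1) (2 - p.1 - q.1) + |p.2 - q.2| :=
  if_neg h

lemma exDist_zero_zero {a b : ℝ} (hb : b ≠ 0) (ha : a ≤ 1) :
    exDist (0, 0) (a, b) = a + |b| := by
  rw [exDist_of_snd_ne (Ne.symm hb)]
  simp only [zero_add, sub_zero, zero_sub, abs_neg]
  rw [min_eq_left (by linarith)]

lemma exDist_one_zero {a b : ℝ} (hb : b ≠ 0) (ha : 0 ≤ a) :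
    exDist (1, 0) (a, b) = 1 - a + |b| := by
  rw [exDist_of_snd_ne (Ne.symm hb)]
  simp only [zero_sub, abs_neg]
  rw [min_eq_right (by linarith)]
  ring

lemma half_mem_exDomain (n : ℕ) : ((1 : ℝ) / 2, (1 : ℝ) / 2 ^ (n + 1)) ∈ exDomain := by
  refine Or.inr (Set.mem_iUnion.2 ⟨n, 2 ^ n, Nat.pow_le_pow_right two_pos n.le_succ, ?_⟩)
  have hdiv : ((2 ^ n : ℕ) : ℝ) / 2 ^ (n + 1) = 1 / 2 := by
    rw [pow_succ]; push_cast; field_simp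
  rw [hdiv]

/-- for every `n`, the point `z = (1/2, 1/2^(n+2))` of `exDomain` lies
in the approximate segment `[x,y]_{1/2^n}` between `x = (0,0)` and `y = (1,0)`, but
outside `B(x,1/2) ∪ B(y,1/2)`. -/
theorem stmt7 (n : ℕ) :
    ((1 : ℝ) / 2, (1 : ℝ) / 2 ^ (n + 2)) ∈ exDomain ∧
    exDist ((0 : ℝ), (0 : ℝ)) ((1 : ℝ) / 2, (1 : ℝ) / 2 ^ (n + 2)) +
        exDist ((1 : ℝ), (0 : ℝ)) ((1 : ℝ) / 2, (1 : ℝ) / 2 ^ (n + 2)) <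
      exDist ((0 : ℝ), (0 : ℝ)) ((1 : ℝ), (0 : ℝ)) + 1 / 2 ^ n ∧
    (1 : ℝ) / 2 < exDist ((0 : ℝ), (0 : ℝ)) ((1 : ℝ) / 2, (1 : ℝ) / 2 ^ (n + 2)) ∧
    (1 : ℝ) / 2 < exDist ((1 : ℝ), (0 : ℝ)) ((1 : ℝ) / 2, (1 : ℝ) / 2 ^ (n + 2)) := by
  have hε : (0 : ℝ) < 1 / 2 ^ (n + 2) := by positivity
  have hdx := exDist_zero_zero hε.ne' (a := 1 / 2) (by norm_num)
  have hdy := exDist_one_zero hε.ne' (a := 1 / 2) (by norm_num)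
  have hdxy : exDist (0, 0) (1, 0) = 1 := by
    rw [exDist_same_snd]; norm_num
  have hε' : (1 : ℝ) / 2 ^ n = 4 * (1 / 2 ^ (n + 2)) := by
    rw [pow_add]; field_simp; norm_num
  rw [abs_of_pos hε] at hdx hdy
  refine ⟨half_mem_exDomain (n + 1), ?_, ?_, ?_⟩ <;> linarith
end

section
/- Let M be a metric space with base point 0 and let x, y, u, v ∈ M with x ≠ y, u ≠ v. Suppose d(x,y) ≥ d(u,v). Then for every 1-Lipschitz function f : M → ℝ with f(0) = 0, one has (f(x) − f(y))/d(x,y) + (f(u) − f(v))/d(u,v) ≤ (d(x,v) + d(u,y) + d(x,y) − d(u,v)) / d(x,y). -/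
/-! Since `d(x,y) ≥ d(u,v)`, put `t = d(x,y)/d(u,v) ≥ 1` and split
`δ_x - δ_y + t (δ_u - δ_v) = (δ_x - δ_v) + (δ_u - δ_y) + (t - 1)(δ_u - δ_v)`.
A 1-Lipschitz function gives at most `d(p,q)` on each `δ_p - δ_q`, so the left-hand side is
bounded by `d(x,v) + d(u,y) + (t - 1) d(u,v) = d(x,v) + d(u,y) + d(x,y) - d(u,v)`;
dividing by `d(x,y)` gives the estimate. -/

theorem LipschitzWith.sub_le_dist {M : Type*} [PseudoMetricSpace M] {f : M → ℝ}
    (hf : LipschitzWith 1 f) (p q : M) : f p - f q ≤ dist p q := by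
  have := hf.le_add_mul p q
  rw [NNReal.coe_one, one_mul] at this
  linarith

theorem LipschitzWith.sub_add_mul_sub_le {M : Type*} [PseudoMetricSpace M] {f : M → ℝ}
    (hf : LipschitzWith 1 f) {t : ℝ} (ht : 1 ≤ t) (x y u v : M) :
    f x - f y + t * (f u - f v) ≤ dist x v + dist u y + (t - 1) * dist u v := by
  have split : f x - f y + t * (f u - f v) =
      (f x - f v) + (f u - f y) + (t - 1) * (f u - f v) := by ring
  have huv : (t - 1) * (f u - f v) ≤ (t - 1) * dist u v :=
    mul_le_mul_of_nonneg_left (hf.sub_le_dist u v) (sub_nonneg.mpr ht)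
  linarith [hf.sub_le_dist x v, hf.sub_le_dist u y]

theorem stmt10_general {M : Type*} [MetricSpace M] (x y u v : M)
    (huv : u ≠ v) (hd : dist u v ≤ dist x y)
    (f : M → ℝ) (hf : LipschitzWith 1 f) :
    (f x - f y) / dist x y + (f u - f v) / dist u v ≤
      (dist x v + dist u y + dist x y - dist u v) / dist x y := by
  have huv_pos : 0 < dist u v := dist_pos.mpr huv
  have hxy_pos : 0 < dist x y := huv_pos.trans_le hd
  have ht : 1 ≤ dist x y / dist u v := (one_le_div huv_pos).mpr hd
  have key := hf.sub_add_mul_sub_le ht x y u v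
  have hscale : (dist x y / dist u v - 1) * dist u v = dist x y - dist u v := by
    field_simp
  calc (f x - f y) / dist x y + (f u - f v) / dist u v
      = (f x - f y + dist x y / dist u v * (f u - f v)) / dist x y := by
        field_simp
    _ ≤ (dist x v + dist u y + dist x y - dist u v) / dist x y := by
        gcongr
        linarith

/-- upper estimate for the action of a norm-one Lipschitz function on
the sum of molecules `m_{xy} + m_{uv}` when `d(x,y) ≥ d(u,v)`. -/
theorem stmt10 {M : Type*} [MetricSpace M] (z x y u v : M)
    (hxy : x ≠ y) (huv : u ≠ v) (hd : dist u v ≤ dist x y)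
    (f : M → ℝ) (hf : LipschitzWith 1 f) (hf0 : f z = 0) :
    (f x - f y) / dist x y + (f u - f v) / dist u v ≤
      (dist x v + dist u y + dist x y - dist u v) / dist x y :=
  stmt10_general x y u v huv hd f hf
end
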